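/- Let G be the cumulative distribution function of a positive random variable ζ with finite mean 1/λ = ∫₀^∞ x dG(x), and for y ≥ 0 with G(y) < 1 let G_y(x) = (G(x+y) − G(y))/(1 − G(y)). Suppose G belongs to the class NBU or to the class NWU, and suppose sup over x ≥ 0 and y ≥ 0 (with G(y) < 1) of |G(x) − G_y(x)| < ε for some ε > 0. Then sup over x ≥ 0 of |G(x) − (1 − e^{−λx})| < ε. -/

import Mathlib

open MeasureTheory Set

/-- Residual-life distribution function: `G_y(x) = (G(x+y) - G(y)) / (1 - G(y))`. -/
noncomputable def resid (G : ℝ → ℝ) (y x : ℝ) : ℝ := (G (x + y) - G y) / (1 - G y)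

open Filter Topology ProbabilityTheory

/-! Write `S = 1 - G` for the survival function, `F x = ∫_x^∞ S` for its tail integral and `δ`
for the supremum in the hypothesis, so that `|S (x + y) - S x * S y| ≤ δ * S y`. Integrating in `y`
over `(0, ∞)`, where `∫ S = 1/λ`, the NBU inequality gives `λ F ≤ S ≤ λ F + δ` and the NWU
inequality gives `λ F - δ ≤ S ≤ λ F`. As `F' = -S`, these are differential inequalities for `F`,
and comparing with the solutions of `F' = -λ F` (a Grönwall argument starting from `λ F 0 = 1`)
pins `S x` to within `δ` of `exp (-λ x)`. -/

section ExponentialComparison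

variable {u : ℕ → ℝ} {f : ℝ → ℝ} {r c x : ℝ}

lemma mul_pow_le_of_succ_mul_le (hr : 0 ≤ r) (h : ∀ k, u (k + 1) * r ≤ u k) (n : ℕ) :
    u n * r ^ n ≤ u 0 := by
  induction n with
  | zero => simp
  | succ n ih =>
    calc u (n + 1) * r ^ (n + 1) = u (n + 1) * r * r ^ n := by ring
      _ ≤ u n * r ^ n := by gcongr; exact h n
      _ ≤ u 0 := ih

lemma mul_pow_le_of_mul_le_succ (hr : 0 ≤ r) (h : ∀ k, u k * r ≤ u (k + 1)) (n : ℕ) :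
    u 0 * r ^ n ≤ u n := by
  induction n with
  | zero => simp
  | succ n ih =>
    calc u 0 * r ^ (n + 1) = u 0 * r ^ n * r := by ring
      _ ≤ u n * r := by gcongr
      _ ≤ u (n + 1) := h n

lemma succ_mul_sub_mul (k : ℕ) (s : ℝ) : ((k + 1 : ℕ) : ℝ) * s - k * s = s := by
  push_cast; ring

/-- The hypothesis `h` is a discretised form of `f' ≤ -c f`. -/
theorem le_mul_exp_neg_of_mul_one_add_le
    (h : ∀ a b, 0 ≤ a → a ≤ b → f b * (1 + c * (b - a)) ≤ f a) (hx : 0 ≤ x) :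
    f x ≤ f 0 * Real.exp (-c * x) := by
  have step (s : ℝ) (hs : 0 ≤ s) (hr : 0 ≤ 1 + c * s) (n : ℕ) :
      f (n * s) * (1 + c * s) ^ n ≤ f 0 := by
    simpa using mul_pow_le_of_succ_mul_le (u := fun k : ℕ => f (k * s)) hr (fun k => by
      simpa only [succ_mul_sub_mul] using
        h (k * s) ((k + 1 : ℕ) * s) (by positivity) (by gcongr; simp)) n
  have hpow : ∀ᶠ n : ℕ in atTop, f x * (1 + c * x / n) ^ n ≤ f 0 := by
    filter_upwards [(tendsto_natCast_atTop_atTop (R := ℝ)).eventually_ge_atTop (-(c * x)),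
      eventually_ne_atTop 0] with n hn hn0
    have hr : 0 ≤ 1 + c * (x / n) := by
      have := div_le_one_of_le₀ hn (Nat.cast_nonneg n)
      rw [neg_div, mul_div_assoc] at this
      linarith
    simpa [mul_div_cancel₀ x (Nat.cast_ne_zero.mpr hn0), mul_div_assoc] using
      step (x / n) (by positivity) hr n
  have hexp := le_of_tendsto ((Real.tendsto_one_add_div_pow_exp (c * x)).const_mul (f x)) hpow
  calc f x = f x * Real.exp (c * x) * Real.exp (-c * x) := by
        rw [mul_assoc, ← Real.exp_add]; simp
    _ ≤ f 0 * Real.exp (-c * x) := by gcongr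

/-- The hypothesis `h` is a discretised form of `f' ≥ -c f`. -/
theorem mul_exp_neg_le_of_mul_one_sub_le
    (h : ∀ a b, 0 ≤ a → a ≤ b → f a * (1 - c * (b - a)) ≤ f b) (hx : 0 ≤ x) :
    f 0 * Real.exp (-c * x) ≤ f x := by
  have step (s : ℝ) (hs : 0 ≤ s) (hr : 0 ≤ 1 - c * s) (n : ℕ) :
      f 0 * (1 - c * s) ^ n ≤ f (n * s) := by
    simpa using mul_pow_le_of_mul_le_succ (u := fun k : ℕ => f (k * s)) hr (fun k => by
      simpa only [succ_mul_sub_mul] using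
        h (k * s) ((k + 1 : ℕ) * s) (by positivity) (by gcongr; simp)) n
  have hpow : ∀ᶠ n : ℕ in atTop, f 0 * (1 - c * (x / n)) ^ n ≤ f x := by
    filter_upwards [(tendsto_natCast_atTop_atTop (R := ℝ)).eventually_ge_atTop (c * x),
      eventually_ne_atTop 0] with n hn hn0
    have hr : 0 ≤ 1 - c * (x / n) := by
      rw [← mul_div_assoc, sub_nonneg]
      exact div_le_one_of_le₀ hn (Nat.cast_nonneg n)
    simpa [mul_div_cancel₀ x (Nat.cast_ne_zero.mpr hn0)] using step (x / n) (by positivity) hr n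
  have hlim := (Real.tendsto_one_add_div_pow_exp (-c * x)).const_mul (f 0)
  refine le_of_tendsto (hlim.congr fun n => ?_) hpow
  ring

end ExponentialComparison

section Translation

variable {E : Type*} [NormedAddCommGroup E]

theorem integral_Ioi_comp_add_left [NormedSpace ℝ E] (f : ℝ → E) (d a : ℝ) :
    ∫ x in Ioi a, f (d + x) = ∫ x in Ioi (d + a), f x := by
  simpa using (measurePreserving_add_left volume d).setIntegral_preimage_emb
    (measurableEmbedding_addLeft d) f (Ioi (d + a))

theorem integrableOn_Ioi_comp_add_left_iff (f : ℝ → E) (d a : ℝ) :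
    IntegrableOn (fun x => f (d + x)) (Ioi a) ↔ IntegrableOn f (Ioi (d + a)) := by
  simpa [Function.comp_def] using (measurePreserving_add_left volume d).integrableOn_comp_preimage
    (measurableEmbedding_addLeft d) (f := f) (s := Ioi (d + a))

end Translation

section TailIntegral

variable {S : ℝ → ℝ} {a b k : ℝ}

lemma mul_le_intervalIntegral (hab : a ≤ b) (hS : IntervalIntegrable S volume a b)
    (h : ∀ t ∈ Icc a b, k ≤ S t) : (b - a) * k ≤ ∫ t in a..b, S t := by
  simpa using intervalIntegral.integral_mono_on hab intervalIntegrable_const hS h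

lemma intervalIntegral_le_mul (hab : a ≤ b) (hS : IntervalIntegrable S volume a b)
    (h : ∀ t ∈ Icc a b, S t ≤ k) : ∫ t in a..b, S t ≤ (b - a) * k := by
  simpa using intervalIntegral.integral_mono_on hab hS intervalIntegrable_const h

variable {c d₁ d₂ x : ℝ}

theorem abs_sub_exp_le_of_tail_integral_bounds (hc : 0 ≤ c) (hd₁ : 0 ≤ d₁) (hd₂ : 0 ≤ d₂)
    (hS : 0 ≤ S) (hSi : IntegrableOn S (Ioi 0)) (hmean : c * ∫ t in Ioi 0, S t = 1)
    (hlow : ∀ x ≥ 0, c * (∫ t in Ioi x, S t) - d₁ ≤ S x)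
    (hup : ∀ x ≥ 0, S x ≤ c * (∫ t in Ioi x, S t) + d₂) (hx : 0 ≤ x) :
    |S x - Real.exp (-c * x)| ≤ d₁ + d₂ := by
  set F := fun x => ∫ t in Ioi x, S t
  replace hlow : ∀ x ≥ 0, c * F x - d₁ ≤ S x := hlow
  replace hup : ∀ x ≥ 0, S x ≤ c * F x + d₂ := hup
  have hinc {a b : ℝ} (ha : 0 ≤ a) (hab : a ≤ b) : F a - F b = ∫ t in a..b, S t :=
    intervalIntegral.integral_Ioi_sub_Ioi (hSi.mono_set (Ioi_subset_Ioi ha)) hab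
  have hint {a b : ℝ} (ha : 0 ≤ a) (hab : a ≤ b) : IntervalIntegrable S volume a b :=
    (intervalIntegrable_iff_integrableOn_Ioc_of_le hab).2
      (hSi.mono_set fun t ht => ha.trans_lt ht.1)
  have hanti {a b : ℝ} (ha : 0 ≤ a) (hab : a ≤ b) : F b ≤ F a := by
    have := intervalIntegral.integral_nonneg (μ := volume) hab fun t _ => hS t
    linarith [hinc ha hab]
  have hupper : c * F x - d₁ ≤ (c * F 0 - d₁) * Real.exp (-c * x) := by
    refine le_mul_exp_neg_of_mul_one_add_le (f := fun t => c * F t - d₁) (fun a b ha hab => ?_) hx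
    have := mul_le_intervalIntegral hab (hint ha hab) (k := c * F b - d₁) fun t ht => by
      have := mul_le_mul_of_nonneg_left (hanti (ha.trans ht.1) ht.2) hc
      linarith [hlow t (ha.trans ht.1)]
    rw [← hinc ha hab] at this
    linear_combination c * this
  have hlower : (c * F 0 + d₂) * Real.exp (-c * x) ≤ c * F x + d₂ := by
    refine mul_exp_neg_le_of_mul_one_sub_le (f := fun t => c * F t + d₂) (fun a b ha hab => ?_) hx
    have := intervalIntegral_le_mul hab (hint ha hab) (k := c * F a + d₂) fun t ht => by
      have := mul_le_mul_of_nonneg_left (hanti ha ht.1) hc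
      linarith [hup t (ha.trans ht.1)]
    rw [← hinc ha hab] at this
    linear_combination c * this
  have hexp := Real.exp_pos (-c * x)
  simp only [F, hmean] at hupper hlower
  rw [abs_le]
  constructor <;> nlinarith [hlow x hx, hup x hx]

end TailIntegral

section Aging

variable {S : ℝ → ℝ} {a c δ x : ℝ}

lemma integrableOn_Ioi_comp_add_left (hSi : IntegrableOn S (Ioi 0)) (hx : 0 ≤ x) :
    IntegrableOn (fun y => S (x + y)) (Ioi 0) :=
  (integrableOn_Ioi_comp_add_left_iff S x 0).2 (by simpa using hSi.mono_set (Ioi_subset_Ioi hx))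

lemma mul_integral_Ioi_le_of_mul_le (hSi : IntegrableOn S (Ioi 0)) (hx : 0 ≤ x)
    (h : ∀ y > 0, a * S y ≤ S (x + y)) : a * ∫ t in Ioi 0, S t ≤ ∫ t in Ioi x, S t :=
  calc a * ∫ t in Ioi 0, S t = ∫ y in Ioi 0, a * S y := (integral_const_mul a _).symm
    _ ≤ ∫ y in Ioi 0, S (x + y) :=
      setIntegral_mono_on (hSi.const_mul a) (integrableOn_Ioi_comp_add_left hSi hx)
        measurableSet_Ioi h
    _ = ∫ t in Ioi x, S t := by rw [integral_Ioi_comp_add_left, add_zero]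

lemma integral_Ioi_le_mul_of_le_mul (hSi : IntegrableOn S (Ioi 0)) (hx : 0 ≤ x)
    (h : ∀ y > 0, S (x + y) ≤ a * S y) : ∫ t in Ioi x, S t ≤ a * ∫ t in Ioi 0, S t :=
  calc ∫ t in Ioi x, S t = ∫ y in Ioi 0, S (x + y) := by rw [integral_Ioi_comp_add_left, add_zero]
    _ ≤ ∫ y in Ioi 0, a * S y :=
      setIntegral_mono_on (integrableOn_Ioi_comp_add_left hSi hx) (hSi.const_mul a)
        measurableSet_Ioi h
    _ = a * ∫ t in Ioi 0, S t := integral_const_mul a _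

theorem abs_sub_exp_le_of_abs_sub_mul_le (hc : 0 < c) (hδ : 0 ≤ δ) (hS : 0 ≤ S)
    (hSi : IntegrableOn S (Ioi 0)) (hmean : ∫ t in Ioi 0, S t = 1 / c)
    (hmul : ∀ x ≥ 0, ∀ y ≥ 0, |S (x + y) - S x * S y| ≤ δ * S y)
    (hAging : (∀ x ≥ 0, ∀ y ≥ 0, S (x + y) ≤ S x * S y) ∨
      (∀ x ≥ 0, ∀ y ≥ 0, S x * S y ≤ S (x + y))) (hx : 0 ≤ x) :
    |S x - Real.exp (-c * x)| ≤ δ := by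
  have hcm : c * ∫ t in Ioi 0, S t = 1 := by rw [hmean]; field_simp
  have hmul_low (x : ℝ) (hx : 0 ≤ x) (y : ℝ) (hy : 0 < y) : (S x - δ) * S y ≤ S (x + y) := by
    linarith [(abs_le.1 (hmul x hx y hy.le)).1]
  have hmul_up (x : ℝ) (hx : 0 ≤ x) (y : ℝ) (hy : 0 < y) : S (x + y) ≤ (S x + δ) * S y := by
    linarith [(abs_le.1 (hmul x hx y hy.le)).2]
  rcases hAging with hNBU | hNWU
  · simpa using abs_sub_exp_le_of_tail_integral_bounds hc.le le_rfl hδ hS hSi hcm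
      (fun x hx => by
        have := integral_Ioi_le_mul_of_le_mul hSi hx fun y hy => hNBU x hx y hy.le
        linear_combination c * this + S x * hcm)
      (fun x hx => by
        have := mul_integral_Ioi_le_of_mul_le hSi hx (hmul_low x hx)
        linear_combination c * this - (S x - δ) * hcm)
      hx
  · simpa using abs_sub_exp_le_of_tail_integral_bounds hc.le hδ le_rfl hS hSi hcm
      (fun x hx => by
        have := integral_Ioi_le_mul_of_le_mul hSi hx (hmul_up x hx)
        linear_combination c * this + (S x + δ) * hcm)
      (fun x hx => by
        have := mul_integral_Ioi_le_of_mul_le hSi hx fun y hy => hNWU x hx y hy.le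
        linear_combination c * this - S x * hcm)
      hx

end Aging

section Residual

variable {G : ℝ → ℝ} {x y δ : ℝ}

lemma sub_resid_eq (hy : G y ≠ 1) :
    G x - resid G y x = ((1 - G (x + y)) - (1 - G x) * (1 - G y)) / (1 - G y) := by
  have : 1 - G y ≠ 0 := sub_ne_zero.2 hy.symm
  rw [resid]
  field_simp
  ring

lemma abs_sub_resid_le_one (hmono : Monotone G) (h0 : ∀ x, 0 ≤ G x) (h1 : ∀ x, G x ≤ 1)
    (hx : 0 ≤ x) (hy : G y < 1) : |G x - resid G y x| ≤ 1 := by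
  have hpos : 0 < 1 - G y := sub_pos.2 hy
  have hle : G y ≤ G (x + y) := hmono (le_add_of_nonneg_left hx)
  have hr0 : 0 ≤ resid G y x := div_nonneg (sub_nonneg.2 hle) hpos.le
  have hr1 : resid G y x ≤ 1 := (div_le_one hpos).2 (by linarith [h1 (x + y)])
  rw [abs_le]
  constructor <;> linarith [h0 x, h1 x]

lemma abs_one_sub_add_sub_mul_le (hmono : Monotone G) (h1 : ∀ x, G x ≤ 1) (hx : 0 ≤ x)
    (h : G y < 1 → |G x - resid G y x| ≤ δ) :
    |(1 - G (x + y)) - (1 - G x) * (1 - G y)| ≤ δ * (1 - G y) := by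
  rcases (h1 y).lt_or_eq with hy | hy
  · have hpos : 0 < 1 - G y := sub_pos.2 hy
    have := h hy
    rwa [sub_resid_eq hy.ne, abs_div, abs_of_pos hpos, div_le_iff₀ hpos] at this
  · have : G (x + y) = 1 := le_antisymm (h1 _) (hy ▸ hmono (le_add_of_nonneg_left hx))
    simp [this, hy]

end Residual

lemma MeasureTheory.Integrable.integrableOn_Ioi_measureReal_lt {α : Type*} [MeasurableSpace α]
    {μ : Measure α} {f : α → ℝ} (hf : Integrable f μ) (hnn : 0 ≤ᵐ[μ] f) :
    IntegrableOn (fun t => μ.real {a | t < f a}) (Ioi 0) := by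
  have hmeas : Measurable fun t => μ.real {a | t < f a} :=
    Measurable.ennreal_toReal (f := fun t => μ {a | t < f a})
      (Antitone.measurable fun _ _ hst => measure_mono fun _ h => hst.trans_lt h)
  refine ⟨hmeas.aestronglyMeasurable, (hasFiniteIntegral_iff_ofReal
    (Eventually.of_forall fun _ => measureReal_nonneg)).2 ?_⟩
  calc ∫⁻ t in Ioi 0, ENNReal.ofReal (μ.real {a | t < f a})
      ≤ ∫⁻ t in Ioi 0, μ {a | t < f a} := lintegral_mono fun _ => ENNReal.ofReal_toReal_le
    _ = ∫⁻ a, ENNReal.ofReal (f a) ∂μ :=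
      (lintegral_eq_lintegral_meas_lt μ hnn hf.1.aemeasurable).symm
    _ < ⊤ := hf.lintegral_lt_top

theorem azlarov_volodin_bound_NBU_NWU_general
    (μ : Measure ℝ) [IsProbabilityMeasure μ] (hPos : μ (Set.Iic 0) = 0)
    (G : ℝ → ℝ) (hG : ∀ x, G x = (μ (Set.Iic x)).toReal)
    (lam : ℝ) (hlam : 0 < lam)
    (hInt : Integrable (fun x : ℝ => x) μ)
    (hMean : ∫ x, x ∂μ = 1 / lam)
    (hAging : (∀ x ≥ (0:ℝ), ∀ y ≥ (0:ℝ), 1 - G (x + y) ≤ (1 - G x) * (1 - G y)) ∨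
      (∀ x ≥ (0:ℝ), ∀ y ≥ (0:ℝ), (1 - G x) * (1 - G y) ≤ 1 - G (x + y)))
    (ε : ℝ)
    (hSup : sSup {v : ℝ | ∃ x ≥ (0:ℝ), ∃ y ≥ (0:ℝ), G y < 1 ∧ v = |G x - resid G y x|} < ε) :
    sSup {v : ℝ | ∃ x ≥ (0:ℝ), v = |G x - (1 - Real.exp (-lam * x))|} < ε := by
  obtain rfl : G = cdf μ := funext fun x => by rw [hG, cdf_eq_real, measureReal_def]
  have hsurv (x : ℝ) : 1 - cdf μ x = μ.real {a | x < a} := by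
    rw [cdf_eq_real, ← probReal_compl_eq_one_sub measurableSet_Iic, compl_Iic]; rfl
  have hnonneg : 0 ≤ᵐ[μ] fun x => x := by
    filter_upwards [measure_eq_zero_iff_ae_notMem.1 hPos] with x hx using (not_le.1 hx).le
  have hSi : IntegrableOn (fun x => 1 - cdf μ x) (Ioi 0) := by
    simpa only [hsurv] using hInt.integrableOn_Ioi_measureReal_lt hnonneg
  have hmean : ∫ t in Ioi 0, 1 - cdf μ t = 1 / lam := by
    simp only [hsurv, ← hMean, hInt.integral_eq_integral_meas_lt hnonneg]
  set D := {v : ℝ | ∃ x ≥ (0:ℝ), ∃ y ≥ (0:ℝ), cdf μ y < 1 ∧ v = |cdf μ x - resid (cdf μ) y x|}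
  have hbdd : BddAbove D := ⟨1, by
    rintro v ⟨x, hx, y, -, hy, rfl⟩
    exact abs_sub_resid_le_one (cdf μ).mono (cdf_nonneg μ) (cdf_le_one μ) hx hy⟩
  have hres (x : ℝ) (hx : 0 ≤ x) (y : ℝ) (hy : 0 ≤ y) (h : cdf μ y < 1) :
      |cdf μ x - resid (cdf μ) y x| ≤ sSup D :=
    le_csSup hbdd ⟨x, hx, y, hy, h, rfl⟩
  have hcdf0 : cdf μ 0 = 0 := by rw [cdf_eq_real, measureReal_def, hPos, ENNReal.toReal_zero]
  have hδ : 0 ≤ sSup D := (abs_nonneg _).trans (hres 0 le_rfl 0 le_rfl (by simp [hcdf0]))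
  have hmul (x : ℝ) (hx : 0 ≤ x) (y : ℝ) (hy : 0 ≤ y) :=
    abs_one_sub_add_sub_mul_le (cdf μ).mono (cdf_le_one μ) hx (hres x hx y hy)
  refine (csSup_le ?_ ?_).trans_lt hSup
  · exact ⟨_, 0, le_rfl, rfl⟩
  rintro v ⟨x, hx, rfl⟩
  rw [abs_sub_comm, sub_right_comm]
  exact abs_sub_exp_le_of_abs_sub_mul_le hlam hδ (fun x => sub_nonneg.2 (cdf_le_one μ x)) hSi
    hmean hmul hAging hx

/-- If the CDF `G` of a positive random variable with mean `1/λ` is NBU or NWU and satisfies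
`sup_{x ≥ 0, y ≥ 0, G(y) < 1} |G(x) - G_y(x)| < ε`, then
`sup_{x ≥ 0} |G(x) - (1 - e^{-λx})| < ε`. -/
theorem azlarov_volodin_bound_NBU_NWU
    (μ : Measure ℝ) [IsProbabilityMeasure μ] (hPos : μ (Set.Iic 0) = 0)
    (G : ℝ → ℝ) (hG : ∀ x, G x = (μ (Set.Iic x)).toReal)
    (lam : ℝ) (hlam : 0 < lam)
    (hInt : Integrable (fun x : ℝ => x) μ)
    (hMean : ∫ x, x ∂μ = 1 / lam)
    (hAging : (∀ x ≥ (0:ℝ), ∀ y ≥ (0:ℝ), 1 - G (x + y) ≤ (1 - G x) * (1 - G y)) ∨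
      (∀ x ≥ (0:ℝ), ∀ y ≥ (0:ℝ), (1 - G x) * (1 - G y) ≤ 1 - G (x + y)))
    (ε : ℝ) (hε : 0 < ε)
    (hSup : sSup {v : ℝ | ∃ x ≥ (0:ℝ), ∃ y ≥ (0:ℝ), G y < 1 ∧ v = |G x - resid G y x|} < ε) :
    sSup {v : ℝ | ∃ x ≥ (0:ℝ), v = |G x - (1 - Real.exp (-lam * x))|} < ε :=
  azlarov_volodin_bound_NBU_NWU_general μ hPos G hG lam hlam hInt hMean hAging ε hSup
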